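/- Let f : [0,∞) → ℝ be bounded and continuous, let 0 < r ≤ 1, and let x ≥ 0 be such that the Lipschitz-type maximal quantity κ_r(f, x) = sup{|f(s) − f(x)|/|s − x|^r : s ≥ 0, s ≠ x} is finite. Then for every positive integer n and every real α with 0 < α ≤ 1/n: |U_n^[α](f; x) − f(x)| ≤ κ_r(f, x) · (Θ_{n,2}^[α](x))^(r/2). -/

import Mathlib

open MeasureTheory Filter

noncomputable section

/-- The Szász basis function `e^(-nu) (nu)^i / i!`. -/
def szaszBasis (n i : ℕ) (u : ℝ) : ℝ :=
  Real.exp (-(n : ℝ) * u) * ((n : ℝ) * u) ^ i / (Nat.factorial i : ℝ)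

/-- The rising factorial `x^(i,-α) = ∏_{j=0}^{i-1} (x + jα)` with increment `α`. -/
def risingFac (x α : ℝ) (i : ℕ) : ℝ :=
  ∏ j ∈ Finset.range i, (x + (j : ℝ) * α)

/-- The Durrmeyer modification of the generalized Szász-Mirakjan operators:
`U_n^[α](f; x) = n Σ_i (1+nα)^(−x/α) (α+1/n)^(−i) x^(i,−α)/i! ∫_0^∞ e^(−nu)(nu)^i/i! f(u) du`. -/
def U (n : ℕ) (α : ℝ) (f : ℝ → ℝ) (x : ℝ) : ℝ :=
  (n : ℝ) * ∑' i : ℕ,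
    (1 + (n : ℝ) * α) ^ (-x / α) * (α + 1 / (n : ℝ)) ^ (-(i : ℤ)) *
      (risingFac x α i / (Nat.factorial i : ℝ)) *
      ∫ u in Set.Ioi (0 : ℝ), szaszBasis n i u * f u

/-- The `m`-th central moment `Θ_{n,m}^[α](x) = U_n^[α]((t−x)^m; x)`. -/
def theta (n : ℕ) (α : ℝ) (m : ℕ) (x : ℝ) : ℝ :=
  U n α (fun t => (t - x) ^ m) x

end

/-!
The operator is integration against a probability measure: `U n α g x = ∫ g ∂μ`, where `μ`
has density `∑ᵢ n wᵢ sᵢ` on `(0, ∞)`, with the Szász basis `sᵢ` and the weights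
`wᵢ = (1 + nα)^(-x/α) (α + 1/n)^(-i) x^(i,-α) / i!`. That `∑ wᵢ = 1` is the binomial
series `∑ (a)ᵢ/i! qⁱ = (1 - q)^(-a)` at `a = x/α`, `q = nα/(1 + nα)`; the moments of `μ`
are finite by the ratio test. Then `|U f - f x| ≤ ∫ |f u - f x| dμ ≤ κ ∫ |u - x|^r dμ`,
and Jensen's inequality for the concave `t ↦ t^(r/2)` bounds the last integral by
`(∫ (u - x)^2 dμ)^(r/2)`.
-/

open Set

lemma risingFac_succ (x α : ℝ) (i : ℕ) :
    risingFac x α (i + 1) = risingFac x α i * (x + i * α) :=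
  Finset.prod_range_succ _ _

lemma risingFac_nonneg {x α : ℝ} (hx : 0 ≤ x) (hα : 0 ≤ α) (i : ℕ) : 0 ≤ risingFac x α i :=
  Finset.prod_nonneg fun _ _ => by positivity

lemma risingFac_eq_pow_mul {α : ℝ} (hα : α ≠ 0) (x : ℝ) (i : ℕ) :
    risingFac x α i = α ^ i * risingFac (x / α) 1 i := by
  induction i with
  | zero => simp [risingFac]
  | succ i ih => rw [risingFac_succ, risingFac_succ, ih, pow_succ]; field_simp

lemma risingFac_one_eq_ascPochhammer (a : ℝ) (i : ℕ) :
    risingFac a 1 i = (ascPochhammer ℝ i).eval a := by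
  induction i with
  | zero => simp [risingFac]
  | succ i ih => rw [risingFac_succ, ascPochhammer_succ_eval, ih, mul_one]

lemma risingFac_one_div_factorial_eq_choose (a : ℝ) (i : ℕ) :
    risingFac a 1 i / i.factorial = Ring.choose (a + i - 1) i := by
  rw [Ring.choose_eq_smul, Polynomial.descPochhammer_smeval_eq_ascPochhammer,
    Polynomial.ascPochhammer_smeval_eq_eval, risingFac_one_eq_ascPochhammer, smul_eq_mul,
    inv_mul_eq_div]
  congr 2
  ring

theorem hasSum_risingFac_mul_pow (a : ℝ) {z : ℝ} (hz : |z| < 1) :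
    HasSum (fun i => risingFac a 1 i / i.factorial * z ^ i) ((1 - z) ^ (-a)) := by
  have h := (Real.one_div_one_sub_rpow_hasFPowerSeriesOnBall_zero a).hasSum
    (y := z) (by simpa [edist_dist, Real.dist_eq] using hz)
  simp only [FormalMultilinearSeries.ofScalars_apply_eq, smul_eq_mul, zero_add] at h
  simp_rw [risingFac_one_div_factorial_eq_choose]
  rwa [Real.rpow_neg (by linarith [le_abs_self z]), ← one_div]

lemma summable_of_succ_eq_mul {f ρ : ℕ → ℝ} {L : ℝ} (hf : ∀ i, 0 ≤ f i)
    (hsucc : ∀ i, f (i + 1) = ρ i * f i) (hL : L < 1) (hρ : Tendsto ρ atTop (nhds L)) :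
    Summable f := by
  obtain ⟨r, hLr, hr1⟩ := exists_between hL
  refine summable_of_ratio_norm_eventually_le hr1 ?_
  filter_upwards [hρ.eventually_lt_const hLr] with i hi
  rw [Real.norm_of_nonneg (hf _), Real.norm_of_nonneg (hf _), hsucc]
  exact mul_le_mul_of_nonneg_right hi.le (hf i)

noncomputable def durrmeyerWeight (n : ℕ) (α x : ℝ) (i : ℕ) : ℝ :=
  (1 + (n : ℝ) * α) ^ (-x / α) * (α + 1 / (n : ℝ)) ^ (-(i : ℤ)) *
    (risingFac x α i / (Nat.factorial i : ℝ))

section DurrmeyerWeight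

variable {n : ℕ} {α x : ℝ}

lemma durrmeyerWeight_nonneg (hα : 0 < α) (hx : 0 ≤ x) (i : ℕ) :
    0 ≤ durrmeyerWeight n α x i := by
  unfold durrmeyerWeight
  have := risingFac_nonneg hx hα.le i
  positivity

lemma durrmeyerWeight_succ (hα : 0 < α) (i : ℕ) :
    durrmeyerWeight n α x (i + 1) =
      durrmeyerWeight n α x i * ((x + i * α) / ((i + 1) * (α + 1 / n))) := by
  have : 0 < α + 1 / (n : ℝ) := by positivity
  simp only [durrmeyerWeight, risingFac_succ, Nat.factorial_succ, Nat.cast_mul, Nat.cast_succ,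
    neg_add, zpow_add₀ this.ne', zpow_neg_one]
  field_simp

theorem hasSum_durrmeyerWeight (hn : 0 < n) (hα : 0 < α) :
    HasSum (durrmeyerWeight n α x) 1 := by
  have hnα : 0 < 1 + (n : ℝ) * α := by positivity
  have hq : 1 - α / (α + 1 / n) = (1 + (n : ℝ) * α)⁻¹ := by field_simp; ring
  have hq_lt : |α / (α + 1 / n)| < 1 := by
    rw [abs_of_nonneg (by positivity), div_lt_one (by positivity)]
    simpa using hn
  have hw : durrmeyerWeight n α x = fun i => (1 + (n : ℝ) * α) ^ (-x / α) *
      (risingFac (x / α) 1 i / i.factorial * (α / (α + 1 / n)) ^ i) := by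
    ext i
    rw [durrmeyerWeight, risingFac_eq_pow_mul hα.ne', zpow_neg, zpow_natCast, div_pow]
    ring
  have h := (hasSum_risingFac_mul_pow (x / α) hq_lt).mul_left ((1 + (n : ℝ) * α) ^ (-x / α))
  rwa [hq, Real.inv_rpow hnα.le, ← Real.rpow_neg hnα.le, neg_neg, ← Real.rpow_add hnα, neg_div,
    neg_add_cancel, Real.rpow_zero, ← neg_div, ← hw] at h

theorem summable_durrmeyerWeight_mul_factorial_div (hn : 0 < n) (hα : 0 < α) (hx : 0 ≤ x)
    (k : ℕ) :
    Summable fun i => durrmeyerWeight n α x i * ((i + k).factorial / i.factorial) := by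
  set c : ℕ → ℝ := fun i => 1 / ((i : ℝ) + 1)
  have hc : Tendsto c atTop (nhds 0) := tendsto_one_div_add_atTop_nhds_zero_nat
  refine summable_of_succ_eq_mul
    (ρ := fun i => ((x - α) * c i + α) * (k * c i + 1) / (α + 1 / n))
    (fun i => mul_nonneg (durrmeyerWeight_nonneg hα hx i) (by positivity)) (fun i => ?_)
    (L := α / (α + 1 / n)) ?_ ?_
  · have : (i.factorial : ℝ) ≠ 0 := by positivity
    simp only [c, durrmeyerWeight_succ hα, Nat.factorial_succ, Nat.cast_mul, Nat.cast_succ,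
      add_right_comm i 1 k]
    field_simp
    push_cast
    ring
  · rw [div_lt_one (by positivity)]
    simpa using hn
  · simpa using ((((hc.const_mul (x - α)).add_const α).mul
      ((hc.const_mul (k : ℝ)).add_const 1))).div_const (α + 1 / n)

end DurrmeyerWeight

section SzaszBasis

variable {n : ℕ}

lemma szaszBasis_nonneg (i : ℕ) {u : ℝ} (hu : 0 ≤ u) : 0 ≤ szaszBasis n i u := by
  unfold szaszBasis
  positivity

@[fun_prop]
lemma continuous_szaszBasis (i : ℕ) : Continuous (szaszBasis n i) := by
  unfold szaszBasis
  fun_prop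

theorem integral_szaszBasis_mul_pow (hn : 0 < n) (i k : ℕ) :
    ∫ u in Ioi 0, szaszBasis n i u * u ^ k =
      (i + k).factorial / (i.factorial * (n : ℝ) ^ (k + 1)) := by
  have hN : (0 : ℝ) < n := by exact_mod_cast hn
  have h := Real.integral_rpow_mul_exp_neg_mul_Ioi (a := ((i + k : ℕ) : ℝ) + 1)
    (by positivity) hN
  rw [add_sub_cancel_right, Real.Gamma_nat_eq_factorial, ← Nat.cast_succ, Real.rpow_natCast] at h
  simp_rw [Real.rpow_natCast] at h
  calc ∫ u in Ioi 0, szaszBasis n i u * u ^ k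
      = ∫ u in Ioi 0, (n : ℝ) ^ i / i.factorial * (u ^ (i + k) * Real.exp (-(n * u))) := by
        refine integral_congr_ae (Eventually.of_forall fun u => ?_)
        simp only [szaszBasis, mul_pow, pow_add]
        ring_nf
    _ = (i + k).factorial / (i.factorial * (n : ℝ) ^ (k + 1)) := by
        rw [integral_const_mul, h, Nat.succ_eq_add_one, one_div_pow, pow_add, pow_add]
        field_simp
        ring

lemma integrableOn_szaszBasis_mul_pow (hn : 0 < n) (i k : ℕ) :
    IntegrableOn (fun u => szaszBasis n i u * u ^ k) (Ioi 0) :=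
  Integrable.of_integral_ne_zero (by rw [integral_szaszBasis_mul_pow hn]; positivity)

end SzaszBasis

noncomputable def durrmeyerMeasure (n : ℕ) (α x : ℝ) : Measure ℝ :=
  (volume.restrict (Ioi 0)).withDensity fun u =>
    ∑' i, ENNReal.ofReal (n * durrmeyerWeight n α x i * szaszBasis n i u)

section DurrmeyerMeasure

variable {n : ℕ} {α x : ℝ}

lemma durrmeyerMeasure_eq_sum : durrmeyerMeasure n α x = Measure.sum fun i =>
    (volume.restrict (Ioi 0)).withDensity fun u =>
      ENNReal.ofReal (n * durrmeyerWeight n α x i * szaszBasis n i u) := by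
  rw [durrmeyerMeasure, ← withDensity_tsum fun i =>
    ((continuous_szaszBasis i).measurable.const_mul _).ennreal_ofReal]
  congr 1
  ext u
  rw [ENNReal.tsum_apply]

lemma ae_durrmeyerMeasure_pos : ∀ᵐ u ∂durrmeyerMeasure n α x, 0 < u :=
  (withDensity_absolutelyContinuous _ _).ae_le (ae_restrict_mem measurableSet_Ioi)

lemma ContinuousOn.aestronglyMeasurable_durrmeyerMeasure {f : ℝ → ℝ}
    (hf : ContinuousOn f (Ici 0)) : AEStronglyMeasurable f (durrmeyerMeasure n α x) :=
  ((hf.mono Ioi_subset_Ici_self).aestronglyMeasurable measurableSet_Ioi).mono_ac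
    (withDensity_absolutelyContinuous _ _)

theorem lintegral_ofReal_durrmeyerMeasure (hα : 0 < α) (hx : 0 ≤ x) {g : ℝ → ℝ}
    (hg : Measurable g) (hg0 : ∀ u, 0 < u → 0 ≤ g u)
    (hint : ∀ i, IntegrableOn (fun u => szaszBasis n i u * g u) (Ioi 0)) :
    ∫⁻ u, ENNReal.ofReal (g u) ∂durrmeyerMeasure n α x =
      ∑' i, ENNReal.ofReal
        (n * durrmeyerWeight n α x i * ∫ u in Ioi 0, szaszBasis n i u * g u) := by
  rw [durrmeyerMeasure_eq_sum, lintegral_sum_measure]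
  refine tsum_congr fun i => ?_
  have hc : 0 ≤ (n : ℝ) * durrmeyerWeight n α x i :=
    mul_nonneg n.cast_nonneg (durrmeyerWeight_nonneg hα hx i)
  rw [lintegral_withDensity_eq_lintegral_mul₀ (by fun_prop) hg.ennreal_ofReal.aemeasurable,
    ← integral_const_mul, ofReal_integral_eq_lintegral_ofReal ((hint i).const_mul _)]
  · refine setLIntegral_congr_fun measurableSet_Ioi fun u hu => ?_
    rw [Pi.mul_apply, ← ENNReal.ofReal_mul (mul_nonneg hc (szaszBasis_nonneg i hu.le)), mul_assoc]
  · filter_upwards [ae_restrict_mem measurableSet_Ioi] with u hu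
    exact mul_nonneg hc (mul_nonneg (szaszBasis_nonneg i hu.le) (hg0 u hu))

theorem isProbabilityMeasure_durrmeyerMeasure (hn : 0 < n) (hα : 0 < α) (hx : 0 ≤ x) :
    IsProbabilityMeasure (durrmeyerMeasure n α x) := by
  have hterm : ∀ i, (n : ℝ) * durrmeyerWeight n α x i *
      ∫ u in Ioi 0, szaszBasis n i u * u ^ 0 = durrmeyerWeight n α x i := by
    intro i
    have : (n : ℝ) ≠ 0 := by exact_mod_cast hn.ne'
    rw [integral_szaszBasis_mul_pow hn]
    field_simp
    simp only [add_zero, zero_add, pow_one]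
    ring
  constructor
  calc durrmeyerMeasure n α x univ = ∫⁻ u, ENNReal.ofReal (u ^ 0) ∂durrmeyerMeasure n α x := by
        simp
    _ = ∑' i, ENNReal.ofReal (durrmeyerWeight n α x i) := by
        rw [lintegral_ofReal_durrmeyerMeasure hα hx (continuous_pow 0).measurable
          (fun u hu => pow_nonneg hu.le 0) fun i => integrableOn_szaszBasis_mul_pow hn i 0]
        simp only [hterm]
    _ = 1 := by
        rw [← ENNReal.ofReal_tsum_of_nonneg (durrmeyerWeight_nonneg hα hx)
          (hasSum_durrmeyerWeight hn hα).summable, (hasSum_durrmeyerWeight hn hα).tsum_eq,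
          ENNReal.ofReal_one]

theorem U_eq_integral (hα : 0 < α) (hx : 0 ≤ x) {g : ℝ → ℝ}
    (hg : Integrable g (durrmeyerMeasure n α x)) :
    U n α g x = ∫ u, g u ∂durrmeyerMeasure n α x := by
  have hU : U n α g x =
      n * ∑' i, durrmeyerWeight n α x i * ∫ u in Ioi 0, szaszBasis n i u * g u := rfl
  rw [durrmeyerMeasure_eq_sum] at hg ⊢
  rw [hU, integral_sum_measure hg, ← tsum_mul_left]
  refine tsum_congr fun i => ?_
  have hc : 0 ≤ (n : ℝ) * durrmeyerWeight n α x i :=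
    mul_nonneg n.cast_nonneg (durrmeyerWeight_nonneg hα hx i)
  rw [integral_withDensity_eq_integral_toReal_smul (by fun_prop)
    (Eventually.of_forall fun _ => ENNReal.ofReal_lt_top), ← mul_assoc, ← integral_const_mul]
  refine setIntegral_congr_fun measurableSet_Ioi fun u hu => ?_
  rw [ENNReal.toReal_ofReal (mul_nonneg hc (szaszBasis_nonneg i (le_of_lt hu))), smul_eq_mul]
  ring

theorem integrable_durrmeyerMeasure_of_summable (hα : 0 < α) (hx : 0 ≤ x) {g : ℝ → ℝ}
    (hg : Measurable g) (hg0 : ∀ u, 0 < u → 0 ≤ g u)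
    (hint : ∀ i, IntegrableOn (fun u => szaszBasis n i u * g u) (Ioi 0))
    (hsum : Summable fun i => durrmeyerWeight n α x i * ∫ u in Ioi 0, szaszBasis n i u * g u) :
    Integrable g (durrmeyerMeasure n α x) := by
  refine ⟨hg.aestronglyMeasurable,
    (hasFiniteIntegral_iff_ofReal (ae_durrmeyerMeasure_pos.mono hg0)).2 ?_⟩
  rw [lintegral_ofReal_durrmeyerMeasure hα hx hg hg0 hint, ← ENNReal.ofReal_tsum_of_nonneg]
  · exact ENNReal.ofReal_lt_top
  · refine fun i => mul_nonneg (mul_nonneg n.cast_nonneg (durrmeyerWeight_nonneg hα hx i)) ?_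
    exact setIntegral_nonneg measurableSet_Ioi fun u hu =>
      mul_nonneg (szaszBasis_nonneg i (le_of_lt hu)) (hg0 u hu)
  · simpa only [mul_assoc] using hsum.mul_left (n : ℝ)

theorem integrable_pow_durrmeyerMeasure (hn : 0 < n) (hα : 0 < α) (hx : 0 ≤ x) (k : ℕ) :
    Integrable (fun u => u ^ k) (durrmeyerMeasure n α x) := by
  refine integrable_durrmeyerMeasure_of_summable hα hx (continuous_pow k).measurable
    (fun u hu => pow_nonneg hu.le k) (integrableOn_szaszBasis_mul_pow hn · k) ?_
  refine ((summable_durrmeyerWeight_mul_factorial_div hn hα hx k).div_const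
    ((n : ℝ) ^ (k + 1))).congr fun i => ?_
  rw [integral_szaszBasis_mul_pow hn]
  ring

theorem integrable_sub_sq_durrmeyerMeasure (hn : 0 < n) (hα : 0 < α) (hx : 0 ≤ x) (y : ℝ) :
    Integrable (fun u => (u - y) ^ 2) (durrmeyerMeasure n α x) := by
  have hpow := integrable_pow_durrmeyerMeasure hn hα hx
  have h : Integrable (fun u => u ^ 2 - 2 * y * u ^ 1 + y ^ 2 * u ^ 0)
      (durrmeyerMeasure n α x) :=
    ((hpow 2).sub ((hpow 1).const_mul _)).add ((hpow 0).const_mul _)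
  exact h.congr (Eventually.of_forall fun u => by ring)

end DurrmeyerMeasure

lemma Real.rpow_le_one_add {t p : ℝ} (ht : 0 ≤ t) (hp0 : 0 ≤ p) (hp1 : p ≤ 1) :
    t ^ p ≤ 1 + t := by
  rcases le_total t 1 with h | h
  · linarith [Real.rpow_le_one ht h hp0]
  · linarith [Real.rpow_le_self_of_one_le h hp1]

section RpowIntegral

variable {Ω : Type*} [MeasurableSpace Ω] {μ : Measure Ω} {g : Ω → ℝ} {p : ℝ}

lemma MeasureTheory.Integrable.rpow_const_of_le_one [IsFiniteMeasure μ] (hp0 : 0 ≤ p)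
    (hp1 : p ≤ 1) (hg0 : ∀ᵐ ω ∂μ, 0 ≤ g ω) (hg : Integrable g μ) :
    Integrable (fun ω => g ω ^ p) μ :=
  ((integrable_const 1).add hg).mono'
    ((Real.continuous_rpow_const hp0).comp_aestronglyMeasurable hg.1)
    (hg0.mono fun ω hω => by
      rw [Real.norm_of_nonneg (Real.rpow_nonneg hω p)]
      exact Real.rpow_le_one_add hω hp0 hp1)

theorem integral_rpow_le_rpow_integral [IsProbabilityMeasure μ] (hp0 : 0 ≤ p) (hp1 : p ≤ 1)
    (hg0 : ∀ᵐ ω ∂μ, 0 ≤ g ω) (hg : Integrable g μ) :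
    ∫ ω, g ω ^ p ∂μ ≤ (∫ ω, g ω ∂μ) ^ p :=
  (Real.concaveOn_rpow hp0 hp1).le_map_integral (Real.continuous_rpow_const hp0).continuousOn
    isClosed_Ici hg0 hg (hg.rpow_const_of_le_one hp0 hp1 hg0)

end RpowIntegral

lemma abs_sub_le_sSup_mul_rpow {f : ℝ → ℝ} {r x s : ℝ} (hr : 0 < r)
    (hbdd : BddAbove {y | ∃ s : ℝ, 0 ≤ s ∧ s ≠ x ∧ y = |f s - f x| / |s - x| ^ r})
    (hs : 0 ≤ s) :
    |f s - f x| ≤ sSup {y | ∃ s : ℝ, 0 ≤ s ∧ s ≠ x ∧ y = |f s - f x| / |s - x| ^ r} *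
      |s - x| ^ r := by
  rcases eq_or_ne s x with rfl | hsx
  · simp [Real.zero_rpow hr.ne']
  · have hpos : 0 < |s - x| ^ r := Real.rpow_pos_of_pos (abs_pos.2 (sub_ne_zero.2 hsx)) r
    exact (div_le_iff₀ hpos).1 (le_csSup hbdd ⟨s, hs, hsx, rfl⟩)

theorem stmt11_general (f : ℝ → ℝ) (hf : ContinuousOn f (Set.Ici 0))
    (hbd : ∃ C : ℝ, ∀ t : ℝ, 0 ≤ t → |f t| ≤ C)
    (r : ℝ) (hr0 : 0 < r) (hr1 : r ≤ 1) (x : ℝ) (hx : 0 ≤ x)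
    (hfin : BddAbove {y | ∃ s : ℝ, 0 ≤ s ∧ s ≠ x ∧ y = |f s - f x| / |s - x| ^ r})
    (n : ℕ) (hn : 0 < n) (α : ℝ) (hα : 0 < α) :
    |U n α f x - f x| ≤
      sSup {y | ∃ s : ℝ, 0 ≤ s ∧ s ≠ x ∧ y = |f s - f x| / |s - x| ^ r} *
        theta n α 2 x ^ (r / 2) := by
  obtain ⟨C, hC⟩ := hbd
  set μ := durrmeyerMeasure n α x with hμ
  set κ := sSup {y | ∃ s : ℝ, 0 ≤ s ∧ s ≠ x ∧ y = |f s - f x| / |s - x| ^ r}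
  have := isProbabilityMeasure_durrmeyerMeasure hn hα hx
  have hκ : 0 ≤ κ := Real.sSup_nonneg fun y ⟨s, _, _, hy⟩ => hy ▸ by positivity
  have hf_int : Integrable f μ := Integrable.of_bound hf.aestronglyMeasurable_durrmeyerMeasure C
    (ae_durrmeyerMeasure_pos.mono fun u hu => hC u hu.le)
  have hsq := integrable_sub_sq_durrmeyerMeasure hn hα hx x
  have hsq0 : ∀ᵐ u ∂μ, 0 ≤ (u - x) ^ 2 := Eventually.of_forall fun u => sq_nonneg _
  have hr2 : r / 2 ≤ 1 := by linarith
  have hsq_rpow (u : ℝ) : ((u - x) ^ 2) ^ (r / 2) = |u - x| ^ r := by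
    rw [← sq_abs, ← Real.rpow_natCast, ← Real.rpow_mul (abs_nonneg _)]
    ring_nf
  calc |U n α f x - f x| = |∫ u, (f u - f x) ∂μ| := by
        rw [U_eq_integral hα hx hf_int, ← hμ, integral_sub hf_int (integrable_const _),
          integral_const, probReal_univ, one_smul]
    _ ≤ ∫ u, |f u - f x| ∂μ := abs_integral_le_integral_abs
    _ ≤ ∫ u, κ * ((u - x) ^ 2) ^ (r / 2) ∂μ := by
        refine integral_mono_ae (hf_int.sub (integrable_const _)).abs
          ((hsq.rpow_const_of_le_one (by positivity) hr2 hsq0).const_mul κ) ?_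
        filter_upwards [ae_durrmeyerMeasure_pos] with u hu
        rw [hsq_rpow]
        exact abs_sub_le_sSup_mul_rpow hr0 hfin hu.le
    _ = κ * ∫ u, ((u - x) ^ 2) ^ (r / 2) ∂μ := integral_const_mul _ _
    _ ≤ κ * (∫ u, (u - x) ^ 2 ∂μ) ^ (r / 2) := by
        gcongr
        exact integral_rpow_le_rpow_integral (by positivity) hr2 hsq0 hsq
    _ = κ * theta n α 2 x ^ (r / 2) := by rw [theta, U_eq_integral hα hx hsq]

theorem stmt11 (f : ℝ → ℝ) (hf : ContinuousOn f (Set.Ici 0))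
    (hbd : ∃ C : ℝ, ∀ t : ℝ, 0 ≤ t → |f t| ≤ C)
    (r : ℝ) (hr0 : 0 < r) (hr1 : r ≤ 1) (x : ℝ) (hx : 0 ≤ x)
    (hfin : BddAbove {y | ∃ s : ℝ, 0 ≤ s ∧ s ≠ x ∧ y = |f s - f x| / |s - x| ^ r})
    (n : ℕ) (hn : 0 < n) (α : ℝ) (hα : 0 < α) (hαn : α ≤ 1 / n) :
    |U n α f x - f x| ≤
      sSup {y | ∃ s : ℝ, 0 ≤ s ∧ s ≠ x ∧ y = |f s - f x| / |s - x| ^ r} *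
        theta n α 2 x ^ (r / 2) :=
  stmt11_general f hf hbd r hr0 hr1 x hx hfin n hn α hα
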